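/- The standard mutation operations σ_2, …, σ_n on exceptional collections of length n satisfy the braid relations: σ_i∘σ_{i+1}∘σ_i = σ_{i+1}∘σ_i∘σ_{i+1}, and σ_i∘σ_j = σ_j∘σ_i when |i−j| > 1. Hence they generate an action of the n-string braid group on the set of exceptional collections of length n. -/

import Mathlib

open CategoryTheory Limits Pretriangulated

universe v u

variable (C : Type u) [Category.{v} C] [Preadditive C] [HasZeroObject C]
  [HasShift C ℤ] [∀ n : ℤ, (CategoryTheory.shiftFunctor C n).Additive] [Pretriangulated C]
  [CategoryTheory.Linear ℂ C]

/-- All graded morphisms from `X` to `Y` vanish. -/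
def NoHoms (X Y : C) : Prop := ∀ n : ℤ, ∀ f : X ⟶ Y⟦n⟧, f = 0

/-- The category `C` is of finite type: total graded Hom spaces are finite dimensional. -/
def FiniteType : Prop :=
  ∀ X Y : C, (∀ n : ℤ, FiniteDimensional ℂ (X ⟶ Y⟦n⟧)) ∧
    {n : ℤ | ∃ f : X ⟶ Y⟦n⟧, f ≠ 0}.Finite

/-- An exceptional object: `Hom^•(E,E) = ℂ`, concentrated in degree `0`. -/
def IsExceptional (E : C) : Prop :=
  (∀ n : ℤ, n ≠ 0 → ∀ f : E ⟶ E⟦n⟧, f = 0) ∧ Module.finrank ℂ (E ⟶ E) = 1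

/-- Membership in the smallest strictly full triangulated subcategory containing `S`. -/
inductive genTriang (S : Set C) : C → Prop
  | of (X : C) (hX : X ∈ S) : genTriang S X
  | isZero (X : C) (hX : IsZero X) : genTriang S X
  | iso {X Y : C} (e : X ≅ Y) (hX : genTriang S X) : genTriang S Y
  | shift (X : C) (n : ℤ) (hX : genTriang S X) : genTriang S (X⟦n⟧)
  | ext₂ (T : Triangle C) (hT : T ∈ distTriang C) (h₁ : genTriang S T.obj₁)
      (h₃ : genTriang S T.obj₃) : genTriang S T.obj₂

/-- The left orthogonal `^⊥S`. -/
def leftOrth (S : Set C) : Set C := {X | ∀ Y ∈ S, NoHoms C X Y}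

/-- The right orthogonal `S^⊥`. -/
def rightOrth (S : Set C) : Set C := {X | ∀ Y ∈ S, NoHoms C Y X}

/-- `Y` is the left mutation of `X` through (the subcategory generated by) `S`. -/
def IsLeftMutation (S : Set C) (X Y : C) : Prop :=
  X ∈ leftOrth C S ∧ Y ∈ rightOrth C S ∧
    ∃ (A : C) (f : A ⟶ X) (g : X ⟶ Y) (h : Y ⟶ A⟦(1:ℤ)⟧),
      genTriang C S A ∧ Triangle.mk f g h ∈ distTriang C

/-- `X` is the right mutation of `Y` through (the subcategory generated by) `S`. -/
def IsRightMutation (S : Set C) (X Y : C) : Prop :=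
  X ∈ leftOrth C S ∧ Y ∈ rightOrth C S ∧
    ∃ (A : C) (f : X ⟶ Y) (g : Y ⟶ A) (h : A ⟶ X⟦(1:ℤ)⟧),
      genTriang C S A ∧ Triangle.mk f g h ∈ distTriang C

/-- `IterLeftMut l X Y` : `Y ≅ L_{E₁} ⋯ L_{E_k} (X)` where `l = [E₁, …, E_k]`. -/
def IterLeftMut : List C → C → C → Prop
  | [], X, Y => Nonempty (X ≅ Y)
  | (E :: t), X, Y => ∃ Z, IterLeftMut t X Z ∧ IsLeftMutation C {E} Z Y

/-- `IterRightMut l Y X` : `X ≅ R_{E_k} ⋯ R_{E₁} (Y)` where `l = [E₁, …, E_k]`. -/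
def IterRightMut : List C → C → C → Prop
  | [], Y, X => Nonempty (Y ≅ X)
  | (E :: t), Y, X => ∃ Z, IsRightMutation C {E} Z Y ∧ IterRightMut t Z X

/-- `E 0, …, E (n-1)` is an exceptional collection. -/
def ExcCollection (n : ℕ) (E : ℕ → C) : Prop :=
  (∀ i < n, IsExceptional C (E i)) ∧
    ∀ i j, i < j → j < n → NoHoms C (E j) (E i)

/-- The set of objects of the collection `E 0, …, E (n-1)`. -/
def collSet (n : ℕ) (E : ℕ → C) : Set C := {X | ∃ i < n, X = E i}


/-- `MutAt i E E'` : the collection `E'` is obtained from `E` by the standard mutation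
operation acting at the (0-indexed) pair of positions `(i, i+1)`, i.e.
`E' i = L_{E i}(E (i+1))[-1]`, `E' (i+1) = E i`, and all other members are unchanged. -/
def MutAt (i : ℕ) (E E' : ℕ → C) : Prop :=
  (∀ j, j ≠ i → j ≠ i + 1 → E' j = E j) ∧ E' (i + 1) = E i ∧
    IsLeftMutation C ({E i} : Set C) (E (i + 1)) ((E' i)⟦(1:ℤ)⟧)


/-!
A left mutation `X → L_S X` is the universal map from `X` into the right orthogonal `S^⊥`:
precomposition with it is bijective on morphisms into `S^⊥`, because its fibre lies in the
triangulated hull of `S`. Universal maps compose and determine their target up to isomorphism.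
For an exceptional triple `(a, b, c)`, both `c → L_a c → L_{L_a b} L_a c` and
`c → L_b c → L_a L_b c` are universal for `{a, b}^⊥`, since `L_a b` and `b` differ by objects of
`⟨a⟩`, and both targets lie in `{a, b}^⊥` (for `L_a L_b c` this uses `Hom^•(b, a) = 0`). So the
two sides of the braid relation agree at the mutated position; all other positions, and the far
commutation relation, are bookkeeping with the uniqueness of mutations.
-/

namespace CategoryTheory.ObjectProperty

variable {𝒜 ℬ : Type*} [Category 𝒜] [Category ℬ]

lemma nonempty_iso_of_isLocal {P : ObjectProperty 𝒜} {X Y Y' : 𝒜} {u : X ⟶ Y} {u' : X ⟶ Y'}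
    (hu : P.isLocal u) (hu' : P.isLocal u') (hY : P Y) (hY' : P Y') : Nonempty (Y ≅ Y') := by
  obtain ⟨φ, rfl⟩ := (hu Y' hY').2 u'
  have : IsIso φ := (P.isLocal_iff_isIso φ hY hY').1 (P.isLocal.of_precomp u φ hu hu')
  exact ⟨asIso φ⟩

lemma isLocal_map_of_adjunction {F : 𝒜 ⥤ ℬ} {G : ℬ ⥤ 𝒜} (adj : F ⊣ G) {P : ObjectProperty ℬ}
    {Q : ObjectProperty 𝒜} (hPQ : ∀ Z, P Z → Q (G.obj Z)) {X Y : 𝒜} {u : X ⟶ Y}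
    (hu : Q.isLocal u) : P.isLocal (F.map u) := by
  intro Z hZ
  have : (fun w : F.obj Y ⟶ Z => F.map u ≫ w) =
      (adj.homEquiv X Z).symm ∘ (fun w => u ≫ w) ∘ adj.homEquiv Y Z := by
    funext w
    simp [Adjunction.homEquiv_naturality_left_symm]
  rw [this]
  exact (adj.homEquiv X Z).symm.bijective.comp
    ((hu _ (hPQ Z hZ)).comp (adj.homEquiv Y Z).bijective)

end CategoryTheory.ObjectProperty

section Orthogonality

variable {D : Type*} [Category D] [Preadditive D] [HasShift D ℤ]

lemma noHoms_iff_subsingleton {X Y : D} : NoHoms D X Y ↔ ∀ n : ℤ, Subsingleton (X ⟶ Y⟦n⟧) :=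
  ⟨fun h n => ⟨fun f g => (h n f).trans (h n g).symm⟩, fun _ _ _ => Subsingleton.elim _ _⟩

lemma NoHoms.eq_zero {X Y : D} (h : NoHoms D X Y) (f : X ⟶ Y) : f = 0 := by
  have : Subsingleton (X ⟶ Y) :=
    ((Iso.refl X).homCongr ((shiftFunctorZero D ℤ).app Y)).subsingleton_congr.1
      (noHoms_iff_subsingleton.1 h 0)
  exact Subsingleton.elim _ _

lemma noHoms_congr {X X' Y Y' : D} (e : X ≅ X') (e' : Y ≅ Y') :
    NoHoms D X Y ↔ NoHoms D X' Y' := by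
  simp only [noHoms_iff_subsingleton]
  exact forall_congr' fun n => (e.homCongr ((shiftFunctor D n).mapIso e')).subsingleton_congr

lemma noHoms_shift_right_iff {X Y : D} (m : ℤ) : NoHoms D X (Y⟦m⟧) ↔ NoHoms D X Y := by
  simp only [noHoms_iff_subsingleton]
  refine Iff.trans ?_ (Equiv.addLeft m).forall_congr_right
  exact forall_congr' fun n =>
    ((Iso.refl X).homCongr ((shiftFunctorAdd D m n).symm.app Y)).subsingleton_congr

lemma noHoms_shift_left_iff {X Y : D} (m : ℤ) : NoHoms D (X⟦m⟧) Y ↔ NoHoms D X Y := by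
  simp only [noHoms_iff_subsingleton]
  refine Iff.trans ?_ (Equiv.addRight (-m)).forall_congr_right
  exact forall_congr' fun n => (((shiftEquiv D m).toAdjunction.homEquiv X (Y⟦n⟧)).trans
    ((Iso.refl X).homCongr ((shiftFunctorAdd D n (-m)).symm.app Y))).subsingleton_congr

section Triangulated

variable [HasZeroObject D] [∀ n : ℤ, (shiftFunctor D n).Additive] [Pretriangulated D]

lemma noHoms_obj₂_left {T : Triangle D} (hT : T ∈ distTriang D) {W : D}
    (h₁ : NoHoms D T.obj₁ W) (h₃ : NoHoms D T.obj₃ W) : NoHoms D T.obj₂ W := fun n f => by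
  obtain ⟨g, rfl⟩ := Triangle.yoneda_exact₂ T hT f (h₁ n _)
  rw [h₃ n g, comp_zero]

lemma noHoms_obj₂_right {T : Triangle D} (hT : T ∈ distTriang D) {W : D}
    (h₁ : NoHoms D W T.obj₁) (h₃ : NoHoms D W T.obj₃) : NoHoms D W T.obj₂ := fun n f => by
  obtain ⟨g, rfl⟩ := Triangle.coyoneda_exact₂ _ (Triangle.shift_distinguished T hT n) f (h₃ n _)
  obtain rfl : g = 0 := h₁ n g
  exact zero_comp

lemma genTriang.noHoms_left {S : Set D} {A W : D} (hA : genTriang D S A)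
    (hW : W ∈ rightOrth D S) : NoHoms D A W := by
  induction hA with
  | of X hX => exact hW X hX
  | isZero X hX => exact fun n f => hX.eq_of_src f 0
  | iso e _ ih => exact (noHoms_congr e (Iso.refl W)).1 ih
  | shift X n _ ih => exact (noHoms_shift_left_iff n).2 ih
  | ext₂ T hT _ _ ih₁ ih₃ => exact noHoms_obj₂_left hT ih₁ ih₃

lemma genTriang.noHoms_right {S : Set D} {A W : D} (hA : genTriang D S A)
    (hW : W ∈ leftOrth D S) : NoHoms D W A := by
  induction hA with
  | of X hX => exact hW X hX
  | isZero X hX => exact fun n f => ((shiftFunctor D n).map_isZero hX).eq_of_tgt f 0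
  | iso e _ ih => exact (noHoms_congr (Iso.refl W) e).1 ih
  | shift X n _ ih => exact (noHoms_shift_right_iff n).2 ih
  | ext₂ T hT _ _ ih₁ ih₃ => exact noHoms_obj₂_right hT ih₁ ih₃

end Triangulated

@[simp]
lemma mem_rightOrth_singleton {a W : D} : W ∈ rightOrth D {a} ↔ NoHoms D a W := by
  simp [rightOrth]

@[simp]
lemma mem_leftOrth_singleton {a W : D} : W ∈ leftOrth D {a} ↔ NoHoms D W a := by
  simp [leftOrth]

@[simp]
lemma mem_rightOrth_pair {a b W : D} : W ∈ rightOrth D {a, b} ↔ NoHoms D a W ∧ NoHoms D b W := by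
  simp [rightOrth]

lemma shift_mem_rightOrth_iff {S : Set D} {W : D} (m : ℤ) :
    W⟦m⟧ ∈ rightOrth D S ↔ W ∈ rightOrth D S :=
  forall₂_congr fun _ _ => noHoms_shift_right_iff m

lemma isLocal_shift_map {S S' : Set D} (hSS' : rightOrth D S ⊆ rightOrth D S') {X Y : D}
    {u : X ⟶ Y} (hu : ObjectProperty.isLocal (· ∈ rightOrth D S') u) (m : ℤ) :
    ObjectProperty.isLocal (· ∈ rightOrth D S) (u⟦m⟧') :=
  ObjectProperty.isLocal_map_of_adjunction (shiftEquiv D m).toAdjunction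
    (fun _ hZ => hSS' ((shift_mem_rightOrth_iff (-m)).2 hZ)) hu

end Orthogonality

section Mutations

variable {D : Type*} [Category D] [Preadditive D] [HasZeroObject D] [HasShift D ℤ]
  [∀ n : ℤ, (shiftFunctor D n).Additive] [Pretriangulated D]

lemma isLocal_mor₂_of_distTriang {T : Triangle D} (hT : T ∈ distTriang D)
    {P : ObjectProperty D} (hP : ∀ W, P W → NoHoms D T.obj₁ W) : P.isLocal T.mor₂ := by
  intro W hW
  have h₁ := hP W hW
  refine ⟨fun w₁ w₂ hw => ?_, fun v => ?_⟩
  · obtain ⟨g, hg⟩ := Triangle.yoneda_exact₃ T hT (w₁ - w₂) (by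
      simpa only [Preadditive.comp_sub, sub_eq_zero] using hw)
    rw [← sub_eq_zero, hg, ((noHoms_shift_left_iff 1).2 h₁).eq_zero g, comp_zero]
  · obtain ⟨w, hw⟩ := Triangle.yoneda_exact₂ T hT v (h₁.eq_zero _)
    exact ⟨w, hw.symm⟩

namespace IsLeftMutation

variable {S : Set D} {X Y : D}

lemma exists_isLocal (h : IsLeftMutation D S X Y) :
    ∃ g : X ⟶ Y, ObjectProperty.isLocal (· ∈ rightOrth D S) g := by
  obtain ⟨-, -, A, _, g, _, hA, hT⟩ := h
  exact ⟨g, isLocal_mor₂_of_distTriang hT fun _ hW => hA.noHoms_left hW⟩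

lemma nonempty_iso {Y' : D} (h : IsLeftMutation D S X Y) (h' : IsLeftMutation D S X Y') :
    Nonempty (Y ≅ Y') := by
  obtain ⟨u, hu⟩ := h.exists_isLocal
  obtain ⟨u', hu'⟩ := h'.exists_isLocal
  exact ObjectProperty.nonempty_iso_of_isLocal hu hu' h.2.1 h'.2.1

lemma noHoms_source_left {W : D} (h : IsLeftMutation D S X Y) (hY : NoHoms D Y W)
    (hW : W ∈ rightOrth D S) : NoHoms D X W := by
  obtain ⟨-, -, A, _, _, _, hA, hT⟩ := h
  exact noHoms_obj₂_left hT (hA.noHoms_left hW) hY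

lemma noHoms_target_left {W : D} (h : IsLeftMutation D S X Y) (hX : NoHoms D X W)
    (hW : W ∈ rightOrth D S) : NoHoms D Y W := by
  obtain ⟨-, -, A, _, _, _, hA, hT⟩ := h
  exact noHoms_obj₂_left (rot_of_distTriang _ hT) hX
    ((noHoms_shift_left_iff 1).2 (hA.noHoms_left hW))

lemma noHoms_target_right {W : D} (h : IsLeftMutation D S X Y) (hX : NoHoms D W X)
    (hW : W ∈ leftOrth D S) : NoHoms D W Y := by
  obtain ⟨-, -, A, _, _, _, hA, hT⟩ := h
  exact noHoms_obj₂_right (rot_of_distTriang _ hT) hX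
    ((noHoms_shift_right_iff 1).2 (hA.noHoms_right hW))

end IsLeftMutation


/-- `L_{L_a b} L_a c ≅ L_a L_b c`, every mutation being normalized by the shift `[-1]`. -/
theorem nonempty_iso_of_braid {a b c b' c' c'' d d' : D} (hba : NoHoms D b a)
    (hb' : IsLeftMutation D {a} b (b'⟦(1:ℤ)⟧)) (hc' : IsLeftMutation D {a} c (c'⟦(1:ℤ)⟧))
    (hc'' : IsLeftMutation D {b'} c' (c''⟦(1:ℤ)⟧)) (hd : IsLeftMutation D {b} c (d⟦(1:ℤ)⟧))
    (hd' : IsLeftMutation D {a} d (d'⟦(1:ℤ)⟧)) : Nonempty (c'' ≅ d') := by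
  have haR : rightOrth D {a, b} ⊆ rightOrth D {a} := fun W hW => by simp_all
  have hbR : rightOrth D {a, b} ⊆ rightOrth D {b} := fun W hW => by simp_all
  have hb'R : rightOrth D {a, b} ⊆ rightOrth D {b'} := fun W hW => by
    simp only [mem_rightOrth_pair] at hW
    simpa [noHoms_shift_left_iff] using hb'.noHoms_target_left hW.2 (by simpa using hW.1)
  have hc''a : NoHoms D a (c''⟦(1:ℤ)⟧) :=
    hc''.noHoms_target_right ((noHoms_shift_right_iff 1).1 (by simpa using hc'.2.1))
      (by simpa [noHoms_shift_right_iff] using hb'.2.1)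
  have hc''R : c''⟦(1:ℤ)⟧ ∈ rightOrth D {a, b} := by
    refine mem_rightOrth_pair.2 ⟨hc''a, hb'.noHoms_source_left ?_ (by simpa using hc''a)⟩
    simpa [noHoms_shift_left_iff] using hc''.2.1
  have hd'R : d'⟦(1:ℤ)⟧ ∈ rightOrth D {a, b} := by
    refine mem_rightOrth_pair.2 ⟨by simpa using hd'.2.1, hd'.noHoms_target_right ?_ (by simpa)⟩
    simpa [noHoms_shift_right_iff] using hd.2.1
  obtain ⟨u₁, hu₁⟩ := hc'.exists_isLocal
  obtain ⟨u₂, hu₂⟩ := hc''.exists_isLocal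
  obtain ⟨v₁, hv₁⟩ := hd.exists_isLocal
  obtain ⟨v₂, hv₂⟩ := hd'.exists_isLocal
  have hu : ObjectProperty.isLocal (· ∈ rightOrth D {a, b}) (u₁ ≫ u₂⟦(1:ℤ)⟧') :=
    MorphismProperty.comp_mem _ _ _ (fun W hW => hu₁ W (haR hW)) (isLocal_shift_map hb'R hu₂ 1)
  have hv : ObjectProperty.isLocal (· ∈ rightOrth D {a, b}) (v₁ ≫ v₂⟦(1:ℤ)⟧') :=
    MorphismProperty.comp_mem _ _ _ (fun W hW => hv₁ W (hbR hW)) (isLocal_shift_map haR hv₂ 1)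
  obtain ⟨e⟩ := ObjectProperty.nonempty_iso_of_isLocal hu hv
    ((shift_mem_rightOrth_iff 1).2 hc''R) ((shift_mem_rightOrth_iff 1).2 hd'R)
  exact ⟨(shiftFunctor D (1:ℤ)).preimageIso ((shiftFunctor D (1:ℤ)).preimageIso e)⟩

namespace MutAt

variable {i j k : ℕ} {E E' F F' : ℕ → D}

lemma apply_of_ne (h : MutAt D i E E') (hk : k ≠ i) (hk' : k ≠ i + 1) : E' k = E k :=
  h.1 k hk hk'

lemma apply_succ (h : MutAt D i E E') : E' (i + 1) = E i := h.2.1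

lemma isLeftMutation (h : MutAt D i E E') : IsLeftMutation D {E i} (E (i + 1)) (E' i⟦(1:ℤ)⟧) :=
  h.2.2

lemma nonempty_iso (h : MutAt D i E E') (h' : MutAt D j F F') (hi : E i = F j)
    (hi' : E (i + 1) = F (j + 1)) : Nonempty (E' i ≅ F' j) := by
  have h'' := h'.isLeftMutation
  rw [← hi, ← hi'] at h''
  exact ⟨(shiftFunctor D (1:ℤ)).preimageIso (h.isLeftMutation.nonempty_iso h'').some⟩

end MutAt

theorem mutAt_braid {i : ℕ} {E E₁ E₂ E₃ F₁ F₂ F₃ : ℕ → D} (hE : NoHoms D (E (i + 1)) (E i))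
    (h₁ : MutAt D i E E₁) (h₂ : MutAt D (i + 1) E₁ E₂) (h₃ : MutAt D i E₂ E₃)
    (h₁' : MutAt D (i + 1) E F₁) (h₂' : MutAt D i F₁ F₂) (h₃' : MutAt D (i + 1) F₂ F₃) (k : ℕ) :
    Nonempty (E₃ k ≅ F₃ k) := by
  have hE₁ : E₁ (i + 1) = E i := h₁.apply_succ
  have hE₁' : E₁ (i + 1 + 1) = E (i + 1 + 1) := h₁.apply_of_ne (by omega) (by omega)
  have hE₂ : E₂ i = E₁ i := h₂.apply_of_ne (by omega) (by omega)
  have hF₁ : F₁ i = E i := h₁'.apply_of_ne (by omega) (by omega)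
  have hF₂ : F₂ (i + 1) = E i := h₂'.apply_succ.trans hF₁
  have hF₂' : F₂ (i + 1 + 1) = E (i + 1) :=
    (h₂'.apply_of_ne (by omega) (by omega)).trans h₁'.apply_succ
  by_cases hki : k = i
  · subst hki
    rw [h₃'.apply_of_ne (by omega) (by omega)]
    have hc' := h₂.isLeftMutation
    have hc'' := h₃.isLeftMutation
    have hd' := h₂'.isLeftMutation
    rw [hE₁, hE₁'] at hc'
    rw [hE₂] at hc''
    rw [hF₁] at hd'
    exact nonempty_iso_of_braid hE h₁.isLeftMutation hc' hc'' h₁'.isLeftMutation hd'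
  by_cases hki' : k = i + 1
  · subst hki'
    rw [h₃.apply_succ, hE₂]
    exact h₁.nonempty_iso h₃' hF₂.symm hF₂'.symm
  refine ⟨eqToIso ?_⟩
  by_cases hki'' : k = i + 1 + 1
  · subst hki''
    rw [h₃.apply_of_ne (by omega) (by omega), h₂.apply_succ, hE₁, h₃'.apply_succ, hF₂]
  rw [h₃.apply_of_ne hki hki', h₂.apply_of_ne hki' hki'', h₁.apply_of_ne hki hki',
    h₃'.apply_of_ne hki' hki'', h₂'.apply_of_ne hki hki', h₁'.apply_of_ne hki' hki'']

theorem mutAt_comm {i j : ℕ} (hij : i + 1 < j) {E E₁ E₂ F₁ F₂ : ℕ → D}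
    (h₁ : MutAt D i E E₁) (h₂ : MutAt D j E₁ E₂) (h₁' : MutAt D j E F₁) (h₂' : MutAt D i F₁ F₂)
    (k : ℕ) : Nonempty (E₂ k ≅ F₂ k) := by
  by_cases hki : k = i
  · subst hki
    rw [h₂.apply_of_ne (by omega) (by omega)]
    exact h₁.nonempty_iso h₂' (h₁'.apply_of_ne (by omega) (by omega)).symm
      (h₁'.apply_of_ne (by omega) (by omega)).symm
  by_cases hkj : k = j
  · subst hkj
    rw [h₂'.apply_of_ne (by omega) (by omega)]
    exact h₂.nonempty_iso h₁' (h₁.apply_of_ne (by omega) (by omega))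
      (h₁.apply_of_ne (by omega) (by omega))
  refine ⟨eqToIso ?_⟩
  by_cases hki' : k = i + 1
  · subst hki'
    rw [h₂.apply_of_ne (by omega) (by omega), h₁.apply_succ, h₂'.apply_succ,
      h₁'.apply_of_ne (by omega) (by omega)]
  by_cases hkj' : k = j + 1
  · subst hkj'
    rw [h₂.apply_succ, h₁.apply_of_ne (by omega) (by omega),
      h₂'.apply_of_ne (by omega) (by omega), h₁'.apply_succ]
  rw [h₂.apply_of_ne hkj hkj', h₁.apply_of_ne hki hki', h₂'.apply_of_ne hki hki',
    h₁'.apply_of_ne hkj hkj']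

end Mutations

theorem braid_relations (n : ℕ) (E : ℕ → C)
    (hE : ExcCollection C n E) :
    (∀ i, i + 3 ≤ n → ∀ E₁ E₂ E₃ F₁ F₂ F₃ : ℕ → C,
      MutAt C i E E₁ → MutAt C (i + 1) E₁ E₂ → MutAt C i E₂ E₃ →
      MutAt C (i + 1) E F₁ → MutAt C i F₁ F₂ → MutAt C (i + 1) F₂ F₃ →
      ∀ j, Nonempty (E₃ j ≅ F₃ j)) ∧
    (∀ i j, i + 1 < j → j + 2 ≤ n → ∀ E₁ E₂ F₁ F₂ : ℕ → C,
      MutAt C i E E₁ → MutAt C j E₁ E₂ →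
      MutAt C j E F₁ → MutAt C i F₁ F₂ →
      ∀ k, Nonempty (E₂ k ≅ F₂ k)) :=
  ⟨fun i hi _ _ _ _ _ _ h₁ h₂ h₃ h₁' h₂' h₃' =>
    mutAt_braid (hE.2 i (i + 1) (by omega) (by omega)) h₁ h₂ h₃ h₁' h₂' h₃',
   fun _ _ hij _ _ _ _ _ h₁ h₂ h₁' h₂' => mutAt_comm hij h₁ h₂ h₁' h₂'⟩
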